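/- arXiv:1406.3813 — 2 statements merged into one kernel-verified Lean document; each statement's English description precedes it below -/
import Mathlib

section
/- Let A be a uniform hereditary right R-module (every submodule of A is projective) and let B be a singular uniform Artinian right R-module. Then: (1) A ⊕ B is a CS-Rickart module; (2) if B is not A-injective, then A ⊕ B is not a CS module. -/
namespace CSRickartPaper

section Defs

variable {R : Type*} [Ring R] {M : Type*} [AddCommGroup M] [Module R M]

/-- `N` is an essential submodule of `P` (inside the ambient module `M`):
`N ≤ P` and every submodule of `P` intersecting `N` trivially is zero. -/
def EssentialIn (N P : Submodule R M) : Prop :=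
  N ≤ P ∧ ∀ K : Submodule R M, K ≤ P → N ⊓ K = ⊥ → K = ⊥

/-- `N` is a small (superfluous) submodule of `P`. -/
def SmallIn (N P : Submodule R M) : Prop :=
  N ≤ P ∧ ∀ K : Submodule R M, K ≤ P → N ⊔ K = P → K = P

/-- `N` is a direct summand of `M`. -/
def IsDirectSummand (N : Submodule R M) : Prop :=
  ∃ K : Submodule R M, IsCompl N K

/-- `N` lies above the direct summand `D` of `M`: `M = D ⊕ K`, `D ≤ N` and
`N ⊓ K` is small in `K`. -/
def LiesAbove (N D : Submodule R M) : Prop :=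
  ∃ K : Submodule R M, IsCompl D K ∧ D ≤ N ∧ SmallIn (N ⊓ K) K

/-- `N` lies above a direct summand of `M`. -/
def LiesAboveSummand (N : Submodule R M) : Prop :=
  ∃ D : Submodule R M, LiesAbove N D

end Defs

section ModuleDefs

variable (R : Type*) [Ring R] (M : Type*) [AddCommGroup M] [Module R M]

/-- `M` is a CS-Rickart module: the kernel of every endomorphism is essential
in a direct summand `eM`, `e` an idempotent endomorphism. -/
def IsCSRickart : Prop :=
  ∀ φ : Module.End R M, ∃ e : Module.End R M, IsIdempotentElem e ∧
    EssentialIn (LinearMap.ker φ) (LinearMap.range e)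

/-- `M` is a d-CS-Rickart module: the image of every endomorphism lies above a
direct summand of `M`. -/
def IsDCSRickart : Prop :=
  ∀ φ : Module.End R M, LiesAboveSummand (LinearMap.range φ)

/-- `M` is a Rickart module. -/
def IsRickart : Prop :=
  ∀ φ : Module.End R M, ∃ e : Module.End R M, IsIdempotentElem e ∧
    LinearMap.ker φ = LinearMap.range e

/-- `M` is a dual Rickart module. -/
def IsDRickart : Prop :=
  ∀ φ : Module.End R M, ∃ e : Module.End R M, IsIdempotentElem e ∧
    LinearMap.range φ = LinearMap.range e

/-- `M` is a CS (extending) module. -/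
def IsCSModule : Prop :=
  ∀ N : Submodule R M, ∃ D : Submodule R M, IsDirectSummand D ∧ EssentialIn N D

/-- `M` is a lifting (d-CS) module. -/
def IsLifting : Prop :=
  ∀ N : Submodule R M, LiesAboveSummand N

/-- `M` is a singular module: the annihilator of every element is an essential
ideal of `R`. -/
def IsSingularModule : Prop :=
  ∀ m : M, EssentialIn (LinearMap.ker (LinearMap.toSpanSingleton R M m)) (⊤ : Submodule R R)

/-- `M` is uniform: every nonzero submodule is essential. -/
def IsUniformModule : Prop :=
  ∀ N : Submodule R M, N ≠ ⊥ → EssentialIn N (⊤ : Submodule R M)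

/-- `M` satisfies the C₂ condition: every submodule isomorphic to a direct
summand is itself a direct summand. -/
def IsC2 : Prop :=
  ∀ N D : Submodule R M, IsDirectSummand D → Nonempty (N ≃ₗ[R] D) → IsDirectSummand N

/-- `M` is K-nonsingular. -/
def IsKNonsingular : Prop :=
  ∀ φ : Module.End R M, ∀ N : Submodule R M, EssentialIn N (⊤ : Submodule R M) →
    N ≤ LinearMap.ker φ → φ = 0

/-- `M` is T-noncosingular. -/
def IsTNoncosingular : Prop :=
  ∀ φ : Module.End R M, φ ≠ 0 → ¬ SmallIn (LinearMap.range φ) (⊤ : Submodule R M)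

/-- `M` is an SIP-CS module. -/
def IsSIPCS : Prop :=
  ∀ A B : Submodule R M, IsDirectSummand A → IsDirectSummand B →
    ∃ D : Submodule R M, IsDirectSummand D ∧ EssentialIn (A ⊓ B) D

/-- `M` is an SSP-d-CS module. -/
def IsSSPdCS : Prop :=
  ∀ A B : Submodule R M, IsDirectSummand A → IsDirectSummand B →
    LiesAboveSummand (A ⊔ B)

end ModuleDefs

section RelDefs

variable (R : Type*) [Ring R] (M N : Type*) [AddCommGroup M] [Module R M]
  [AddCommGroup N] [Module R N]

/-- `M` is relatively CS-Rickart to `N`. -/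
def IsRelCSRickart : Prop :=
  ∀ φ : M →ₗ[R] N, ∃ e : Module.End R M, IsIdempotentElem e ∧
    EssentialIn (LinearMap.ker φ) (LinearMap.range e)

/-- `M` is relatively d-CS-Rickart to `N`. -/
def IsRelDCSRickart : Prop :=
  ∀ φ : M →ₗ[R] N, LiesAboveSummand (LinearMap.range φ)

/-- `N` is `M`-injective. -/
def IsRelInjective : Prop :=
  ∀ (A : Submodule R M) (f : A →ₗ[R] N), ∃ g : M →ₗ[R] N, ∀ a : A, g a = f a

end RelDefs

section RingDefs

variable (R : Type*) [Ring R]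

/-- The annihilator of an element `a` of `R`, as an ideal (kernel of `r ↦ r • a`). -/
def annElem (a : R) : Submodule R R :=
  LinearMap.ker (LinearMap.toSpanSingleton R R a)

/-- The annihilator of a subset `X` of `R`. -/
def annSet (X : Set R) : Submodule R R :=
  ⨅ x ∈ X, annElem R x

/-- The principal ideal generated by `e`, i.e. the image of `r ↦ r • e`. -/
def idealGen (e : R) : Submodule R R :=
  LinearMap.range (LinearMap.toSpanSingleton R R e)

/-- `R` is an ACS ring: the annihilator of every element is essential in a
direct summand `eR` of `R`. -/
def IsACSRing : Prop :=
  ∀ a : R, ∃ e : R, IsIdempotentElem e ∧ EssentialIn (annElem R a) (idealGen R e)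

/-- `R` is an essentially Baer ring. -/
def IsEssentiallyBaer : Prop :=
  ∀ X : Set R, X.Nonempty → ∃ e : R, IsIdempotentElem e ∧
    EssentialIn (annSet R X) (idealGen R e)

/-- The Jacobson radical of the ring `R`. -/
noncomputable def jacRad : Ideal R := Ideal.jacobson (⊥ : Ideal R)

/-- `R` is semiregular: `R/J(R)` is von Neumann regular and idempotents lift
modulo `J(R)` (stated elementwise). -/
def IsSemiregularRing : Prop :=
  (∀ a : R, ∃ b : R, a - a * b * a ∈ jacRad R) ∧
  (∀ a : R, a - a * a ∈ jacRad R →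
    ∃ e : R, IsIdempotentElem e ∧ e - a ∈ jacRad R)

/-- `J(R)` coincides with the singular ideal `Z(R)`. -/
def JacEqSingular : Prop :=
  ∀ a : R, a ∈ jacRad R ↔ EssentialIn (annElem R a) (⊤ : Submodule R R)

end RingDefs

section GenDefs

variable {R : Type*} [Ring R] {M : Type*} [AddCommGroup M] [Module R M]

/-- A submodule is `n`-generated if it is spanned by at most `n` elements. -/
def NGen (n : ℕ) (N : Submodule R M) : Prop :=
  ∃ f : Fin n → M, Submodule.span R (Set.range f) = N

end GenDefs

end CSRickartPaper

/-!
A module whose cyclic submodules are projective is nonsingular: if `Rm ≅ R/ann m` is projective,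
`ann m` is a direct summand of `R`, so it cannot be essential unless `m = 0`. There are no nonzero
maps from a singular module to a nonsingular one, and every map from a nonsingular module to a
singular one has essential kernel. Hence an endomorphism `φ` of `A × B` is lower triangular,
`φ (a, b) = (φ₁ a, φ₂ a + φ₃ b)`, with `ker φ₂` essential in `A`. If `φ₃` is injective it is an
automorphism (`B` is Artinian) and `ker φ` is the graph of `-φ₃⁻¹ φ₂` over `ker φ₁`; otherwise
`ker φ₃` is essential in the uniform module `B` and `ker φ` lies between
`(ker φ₁ ⊓ ker φ₂) × ker φ₃` and `ker φ₁ × B`. Either way, the summand `0` or `A` of the uniform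
module `A` that contains `ker φ₁` essentially yields the required summand of `A × B`.

If `A × B` is CS, let `D` be a summand containing the graph of `f : N → B` essentially, with
complement `E`. Then `D` meets `0 × B` trivially, `0 × B ≤ E` because the `A`-component of the
projection onto `D` restricted to the singular module `B` vanishes, and `E ≤ 0 × B` because `A` is
uniform and the first projection of `D` is nonzero. So `D` is the graph of an extension of `f`.
-/

namespace CSRickartPaper

open LinearMap Submodule

section Essential

variable {R : Type*} [Ring R] {M M' : Type*} [AddCommGroup M] [Module R M]
  [AddCommGroup M'] [Module R M'] {N N' P Q : Submodule R M}

theorem essentialIn_iff :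
    EssentialIn N P ↔ N ≤ P ∧ ∀ x ∈ P, x ≠ 0 → ∃ r : R, r • x ∈ N ∧ r • x ≠ 0 := by
  refine and_congr_right fun _ => ⟨fun h x hx hx0 => ?_, fun h K hKP hNK => ?_⟩
  · by_contra! hr
    refine hx0 (span_singleton_eq_bot.1 (h _ ((span_singleton_le_iff_mem _ _).2 hx) ?_))
    rw [eq_bot_iff]
    rintro _ ⟨hN, hspan⟩
    obtain ⟨r, rfl⟩ := mem_span_singleton.1 hspan
    exact (mem_bot R).2 (hr r hN)
  · refine eq_bot_iff.2 fun x hxK => (mem_bot R).2 ?_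
    by_contra hx0
    obtain ⟨r, hrN, hr0⟩ := h x (hKP hxK) hx0
    exact hr0 ((mem_bot R).1 (hNK ▸ mem_inf.2 ⟨hrN, K.smul_mem r hxK⟩))

theorem essentialIn_self (P : Submodule R M) : EssentialIn P P :=
  ⟨le_rfl, fun K hK h => by rwa [inf_eq_right.2 hK] at h⟩

theorem EssentialIn.mono (h : EssentialIn N P) (hN : N ≤ N') (hN' : N' ≤ P) :
    EssentialIn N' P :=
  ⟨hN', fun K hK hK' => h.2 K hK (eq_bot_iff.2 (hK' ▸ inf_le_inf_right K hN))⟩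

theorem EssentialIn.trans (hNP : EssentialIn N P) (hPQ : EssentialIn P Q) : EssentialIn N Q :=
  ⟨hNP.1.trans hPQ.1, fun K hK hNK => hPQ.2 K hK <|
    hNP.2 _ inf_le_left (by rw [← inf_assoc, inf_eq_left.2 hNP.1, hNK])⟩

theorem EssentialIn.inf (h : EssentialIn N ⊤) (P : Submodule R M) : EssentialIn (N ⊓ P) P :=
  ⟨inf_le_right, fun K hK hNK => h.2 K le_top (by rwa [inf_assoc, inf_eq_right.2 hK] at hNK)⟩

theorem EssentialIn.inf_eq_bot (h : EssentialIn N P) {K : Submodule R M} (hNK : N ⊓ K = ⊥) :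
    P ⊓ K = ⊥ :=
  h.2 _ inf_le_left (by rw [← inf_assoc, inf_eq_left.2 h.1, hNK])

theorem EssentialIn.map (h : EssentialIn N P) {f : M →ₗ[R] M'} (hf : Function.Injective f) :
    EssentialIn (N.map f) (P.map f) := by
  refine essentialIn_iff.2 ⟨map_mono h.1, ?_⟩
  rintro _ ⟨x, hx, rfl⟩ hfx
  obtain ⟨r, hrN, hr0⟩ := (essentialIn_iff.1 h).2 x hx (by rintro rfl; exact hfx (map_zero f))
  exact ⟨r, by rw [← map_smul]; exact mem_map_of_mem hrN,
    by rwa [← map_smul, Ne, map_eq_zero_iff f hf]⟩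

theorem EssentialIn.prod {N₁ P₁ : Submodule R M} {N₂ P₂ : Submodule R M'}
    (h₁ : EssentialIn N₁ P₁) (h₂ : EssentialIn N₂ P₂) :
    EssentialIn (N₁.prod N₂) (P₁.prod P₂) := by
  rw [essentialIn_iff] at h₁ h₂ ⊢
  refine ⟨prod_mono h₁.1 h₂.1, fun x ⟨hx₁, hx₂⟩ hx0 => ?_⟩
  -- first make the `M`-component land in `N₁`, then the `M'`-component in `N₂`
  obtain ⟨r, hr₁, hr⟩ : ∃ r : R, r • x.1 ∈ N₁ ∧ r • x ≠ 0 := by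
    by_cases ha : x.1 = 0
    · exact ⟨1, by simp [ha], by simpa using hx0⟩
    · obtain ⟨r, hr₁, hr0⟩ := h₁.2 x.1 hx₁ ha
      exact ⟨r, hr₁, fun h => hr0 (congrArg Prod.fst h)⟩
  by_cases hb : r • x.2 = 0
  · exact ⟨r, ⟨hr₁, by simp [hb]⟩, hr⟩
  · obtain ⟨s, hs₂, hs0⟩ := h₂.2 (r • x.2) (P₂.smul_mem r hx₂) hb
    refine ⟨s * r, ⟨?_, ?_⟩, fun h => hs0 ?_⟩
    · simpa [mul_smul] using N₁.smul_mem s hr₁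
    · simpa [mul_smul] using hs₂
    · simpa [mul_smul] using congrArg Prod.snd h

end Essential

section Uniform

variable {R : Type*} [Ring R] {M : Type*} [AddCommGroup M] [Module R M]

theorem IsUniformModule.eq_bot_of_inf_eq_bot (hM : IsUniformModule R M) {N K : Submodule R M}
    (hN : N ≠ ⊥) (hNK : N ⊓ K = ⊥) : K = ⊥ :=
  (hM N hN).2 K le_top hNK

theorem IsUniformModule.exists_isIdempotentElem_essentialIn (hM : IsUniformModule R M)
    (N : Submodule R M) :
    ∃ e : Module.End R M, IsIdempotentElem e ∧ EssentialIn N (range e) := by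
  rcases eq_or_ne N ⊥ with rfl | hN
  · exact ⟨0, IsIdempotentElem.zero, by rw [range_zero]; exact essentialIn_self ⊥⟩
  · exact ⟨1, IsIdempotentElem.one, by rw [Module.End.one_eq_id, range_id]; exact hM N hN⟩

end Uniform

section Nonsingular

variable (R : Type*) [Ring R] (M : Type*) [AddCommGroup M] [Module R M]

/-- `M` is nonsingular: its singular submodule `Z(M)` is zero. -/
def IsNonsingularModule : Prop :=
  ∀ m : M, EssentialIn (ker (toSpanSingleton R M m)) (⊤ : Submodule R R) → m = 0

variable {R M} {S : Type*} [AddCommGroup S] [Module R S]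

theorem isNonsingularModule_of_projective (h : ∀ m : M, Module.Projective R (R ∙ m)) :
    IsNonsingularModule R M := by
  intro m hm
  by_contra hm0
  let m' : R ∙ m := ⟨m, mem_span_singleton_self m⟩
  let π : R →ₗ[R] R ∙ m := toSpanSingleton R _ m'
  have hπ : Function.Surjective π := by
    rintro ⟨y, hy⟩
    obtain ⟨r, rfl⟩ := mem_span_singleton.1 hy
    exact ⟨r, rfl⟩
  obtain ⟨s, hs⟩ := Module.projective_lifting_property π LinearMap.id hπ
  have hπs : ∀ y, π (s y) = y := LinearMap.congr_fun hs
  have hs0 : s m' ≠ 0 := fun h0 => hm0 (by simpa [h0, m'] using (congrArg Subtype.val (hπs m')).symm)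
  obtain ⟨r, hr, hr0⟩ := (essentialIn_iff.1 hm).2 (s m') trivial hs0
  have hπr : π (r • s m') = 0 := Subtype.ext (by simpa [π] using hr)
  -- `s ∘ π` is the identity on the range of `s`, which therefore meets `ann m` trivially
  refine hr0 ?_
  calc r • s m' = s (π (r • s m')) := by rw [map_smul π, hπs, map_smul]
    _ = 0 := by rw [hπr, map_zero]

theorem linearMap_eq_zero_of_isSingularModule (hS : IsSingularModule R S)
    (hM : IsNonsingularModule R M) (f : S →ₗ[R] M) : f = 0 :=
  LinearMap.ext fun s => hM _ <| (hS s).mono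
    (fun r (hr : r • s = 0) => show r • f s = 0 by rw [← map_smul, hr, map_zero]) le_top

theorem essentialIn_ker_of_isSingularModule (hM : IsNonsingularModule R M)
    (hS : IsSingularModule R S) (f : M →ₗ[R] S) : EssentialIn (ker f) ⊤ := by
  refine essentialIn_iff.2 ⟨le_top, fun m _ hm0 => ?_⟩
  by_contra! h
  refine hm0 (hM m ((hS (f m)).mono (fun r (hr : r • f m = 0) => ?_) le_top))
  exact h r (by rw [mem_ker, map_smul, hr])

end Nonsingular

section CSRickart

variable {R : Type*} [Ring R] {A B : Type*} [AddCommGroup A] [Module R A]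
  [AddCommGroup B] [Module R B] {φ : Module.End R (A × B)}
  {φ₁ : A →ₗ[R] A} {φ₂ : A →ₗ[R] B} {φ₃ : B →ₗ[R] B}

theorem mem_ker_iff_of_fst_comp_comp_inr_eq_zero (h : fst R A B ∘ₗ φ ∘ₗ inr R A B = 0)
    (x : A × B) :
    x ∈ ker φ ↔ (fst R A B ∘ₗ φ ∘ₗ inl R A B) x.1 = 0 ∧
      (snd R A B ∘ₗ φ ∘ₗ inl R A B) x.1 + (snd R A B ∘ₗ φ ∘ₗ inr R A B) x.2 = 0 := by
  have hx : φ x = φ (x.1, 0) + φ (0, x.2) := by rw [← map_add]; simp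
  have h0 : (φ (0, x.2)).1 = 0 := LinearMap.congr_fun h x.2
  rw [mem_ker, hx, Prod.ext_iff]
  simp [h0]

theorem exists_isIdempotentElem_essentialIn_ker_of_bijective (hA : IsUniformModule R A)
    (hφ₃ : Function.Bijective φ₃) (hker : ∀ x, x ∈ ker φ ↔ φ₁ x.1 = 0 ∧ φ₂ x.1 + φ₃ x.2 = 0) :
    ∃ e : Module.End R (A × B), IsIdempotentElem e ∧ EssentialIn (ker φ) (range e) := by
  let ψ := LinearEquiv.ofBijective φ₃ hφ₃
  let g : A →ₗ[R] A × B := LinearMap.id.prod (-(ψ.symm.toLinearMap ∘ₗ φ₂))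
  have hg : Function.Injective g := fun a a' h => congrArg Prod.fst h
  have hkerφ : ker φ = (ker φ₁).map g := by
    ext ⟨a, b⟩
    have hb : φ₂ a + φ₃ b = 0 ↔ -ψ.symm (φ₂ a) = b := by
      rw [← map_neg, LinearEquiv.symm_apply_eq, LinearEquiv.ofBijective_apply, neg_eq_iff_add_eq_zero]
    simp [hker, hb, g]
  obtain ⟨e, he, hess⟩ := hA.exists_isIdempotentElem_essentialIn (ker φ₁)
  refine ⟨g ∘ₗ e ∘ₗ fst R A B, ?_, ?_⟩
  · -- `fst ∘ₗ g = id`, so the square is `g ∘ₗ (e * e) ∘ₗ fst`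
    refine LinearMap.ext fun x => ?_
    change g (e (e x.1)) = g (e x.1)
    rw [← Module.End.mul_apply, he.eq]
  · rw [hkerφ, range_comp, range_comp_of_range_eq_top _ range_fst]
    exact hess.map hg

theorem exists_isIdempotentElem_essentialIn_ker_of_essentialIn (hA : IsUniformModule R A)
    (hAns : IsNonsingularModule R A) (hBs : IsSingularModule R B)
    (hφ₃ : EssentialIn (ker φ₃) ⊤) (hker : ∀ x, x ∈ ker φ ↔ φ₁ x.1 = 0 ∧ φ₂ x.1 + φ₃ x.2 = 0) :
    ∃ e : Module.End R (A × B), IsIdempotentElem e ∧ EssentialIn (ker φ) (range e) := by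
  obtain ⟨e, he, hess⟩ := hA.exists_isIdempotentElem_essentialIn (ker φ₁)
  refine ⟨e.prodMap LinearMap.id, by rw [IsIdempotentElem, prodMap_mul, he.eq]; rfl, ?_⟩
  rw [range_prodMap, range_id]
  have hlower : (ker φ₂ ⊓ ker φ₁).prod (ker φ₃) ≤ ker φ := by
    rintro x ⟨⟨h₂, h₁⟩, h₃⟩
    exact (hker x).2 ⟨h₁, by rw [mem_ker.1 h₂, mem_ker.1 h₃, add_zero]⟩
  have hupper : ker φ ≤ (range e).prod ⊤ := fun x hx => ⟨hess.1 ((hker x).1 hx).1, trivial⟩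
  exact ((((essentialIn_ker_of_isSingularModule hAns hBs φ₂).inf _).trans hess).prod hφ₃).mono
    hlower hupper

theorem isCSRickart_prod (hA : IsUniformModule R A) (hAns : IsNonsingularModule R A)
    (hBs : IsSingularModule R B) (hBu : IsUniformModule R B) [IsArtinian R B] :
    IsCSRickart R (A × B) := by
  intro φ
  have hker := mem_ker_iff_of_fst_comp_comp_inr_eq_zero
    (linearMap_eq_zero_of_isSingularModule hBs hAns (fst R A B ∘ₗ φ ∘ₗ inr R A B))
  by_cases h₃ : ker (snd R A B ∘ₗ φ ∘ₗ inr R A B) = ⊥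
  · exact exists_isIdempotentElem_essentialIn_ker_of_bijective hA
      (IsArtinian.bijective_of_injective_endomorphism _ (ker_eq_bot.1 h₃)) hker
  · exact exists_isIdempotentElem_essentialIn_ker_of_essentialIn hA hAns hBs (hBu _ h₃) hker

end CSRickart

section RelInjective

variable {R : Type*} [Ring R] {A B : Type*} [AddCommGroup A] [Module R A]
  [AddCommGroup B] [Module R B] {D E : Submodule R (A × B)}

theorem ker_fst_le_of_isCompl (hAns : IsNonsingularModule R A) (hBs : IsSingularModule R B)
    (hDE : IsCompl D E) (hD : D ⊓ ker (fst R A B) = ⊥) : ker (fst R A B) ≤ E := by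
  rintro ⟨a, b⟩ (ha : a = 0)
  subst ha
  have hfst := LinearMap.congr_fun (linearMap_eq_zero_of_isSingularModule hBs hAns
    (fst R A B ∘ₗ D.projection E hDE ∘ₗ inr R A B)) b
  have hmem : D.projection E hDE (0, b) ∈ D ⊓ ker (fst R A B) :=
    ⟨projection_apply_mem hDE _, hfst⟩
  rw [hD, mem_bot] at hmem
  exact (projection_apply_eq_zero_iff hDE).1 hmem

theorem le_ker_fst_of_isCompl (hA : IsUniformModule R A) (hDE : IsCompl D E)
    (hE : ker (fst R A B) ≤ E) (hD : D.map (fst R A B) ≠ ⊥) : E ≤ ker (fst R A B) := by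
  refine le_ker_iff_map.2 (hA.eq_bot_of_inf_eq_bot hD (eq_bot_iff.2 ?_))
  rintro _ ⟨⟨d, hd, rfl⟩, ⟨x, hx, hxd⟩⟩
  have hdE : d ∈ E := by
    have hdx : d - x ∈ E := hE (by simpa [sub_eq_zero] using hxd.symm)
    simpa using E.add_mem hdx hx
  have hd0 : d ∈ D ⊓ E := mem_inf.2 ⟨hd, hdE⟩
  rw [disjoint_iff.1 hDE.disjoint, mem_bot] at hd0
  simp [hd0]

theorem exists_extension_of_isCompl_ker_fst {N : Submodule R A} (f : N →ₗ[R] B)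
    (hD : IsCompl D (ker (fst R A B))) (hf : range (N.subtype.prod f) ≤ D) :
    ∃ g : A →ₗ[R] B, ∀ n : N, g n = f n := by
  refine ⟨snd R A B ∘ₗ D.projection _ hD ∘ₗ inl R A B, fun n => ?_⟩
  have hsplit : ((n : A), (0 : B)) = ((n : A), f n) + ((0 : A), -f n) := by simp
  have hproj : D.projection _ hD ((n : A), 0) = ((n : A), f n) := by
    rw [hsplit, map_add, projection_apply_of_mem_left hD (hf ⟨n, rfl⟩ : ((n : A), f n) ∈ D),
      projection_apply_of_mem_right hD (by simp), add_zero]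
  simp [hproj]

theorem isRelInjective_of_isCSModule (hA : IsUniformModule R A)
    (hAns : IsNonsingularModule R A) (hBs : IsSingularModule R B)
    (hCS : IsCSModule R (A × B)) : IsRelInjective R A B := by
  intro N f
  rcases eq_or_ne N ⊥ with rfl | hN
  · exact ⟨0, fun n => by simp [Subsingleton.elim n 0]⟩
  obtain ⟨D, ⟨E, hDE⟩, hGD⟩ := hCS (range (N.subtype.prod f))
  have hD : D ⊓ ker (fst R A B) = ⊥ := hGD.inf_eq_bot <| eq_bot_iff.2 <| by
    rintro _ ⟨⟨n, rfl⟩, hn⟩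
    have hn0 : n = 0 := Subtype.ext hn
    simp [hn0]
  have hDfst : D.map (fst R A B) ≠ ⊥ := by
    obtain ⟨a, ha, ha0⟩ := (Submodule.ne_bot_iff N).1 hN
    exact (Submodule.ne_bot_iff _).2 ⟨a, ⟨_, hGD.1 ⟨⟨a, ha⟩, rfl⟩, rfl⟩, ha0⟩
  have hE := ker_fst_le_of_isCompl hAns hBs hDE hD
  have hEeq : E = ker (fst R A B) := le_antisymm (le_ker_fst_of_isCompl hA hDE hE hDfst) hE
  exact exists_extension_of_isCompl_ker_fst f (hEeq ▸ hDE) hGD.1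

end RelInjective

/-- Let `A` be a uniform hereditary module and `B` a singular uniform Artinian
module. Then `A ⊕ B` is CS-Rickart, and if `B` is not `A`-injective then
`A ⊕ B` is not a CS module. -/
theorem uniform_hereditary_singular_artinian_csRickart
    {R : Type*} [Ring R] {A B : Type*} [AddCommGroup A] [Module R A]
    [AddCommGroup B] [Module R B]
    (hAu : IsUniformModule R A) (hAher : ∀ N : Submodule R A, Module.Projective R N)
    (hBs : IsSingularModule R B) (hBu : IsUniformModule R B) (hBart : IsArtinian R B) :
    IsCSRickart R (A × B) ∧ (¬ IsRelInjective R A B → ¬ IsCSModule R (A × B)) := by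
  have hAns : IsNonsingularModule R A := isNonsingularModule_of_projective fun m => hAher _
  exact ⟨isCSRickart_prod hAu hAns hBs hBu,
    fun hinj hCS => hinj (isRelInjective_of_isCSModule hAu hAns hBs hCS)⟩

end CSRickartPaper
end

section
/- Let R be a ring. (1) If every right R-module is d-CS-Rickart, then every right R-module is a lifting module. (2) If every right R-module is CS-Rickart, then every right R-module is a CS module. -/
namespace CSRickartPaper

universe v

theorem isCompl_inf_sup_of_le {α : Type*} [Lattice α] [BoundedOrder α] [IsModularLattice α]
    {a b c z : α} (haz : IsCompl a z) (hbc : IsCompl b c) (hca : c ≤ a) :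
    IsCompl (a ⊓ b) (c ⊔ z) := by
  refine (hbc.disjoint.mono_left inf_le_right).isCompl_sup_right_of_isCompl_sup_left ?_
  rwa [sup_comm, inf_comm, ← sup_inf_assoc_of_le b hca, hbc.symm.sup_eq_top, top_inf_eq]

section Submodules

variable {R : Type*} [Ring R] {M : Type*} [AddCommGroup M] [Module R M]
  {W : Type*} [AddCommGroup W] [Module R W]

theorem SmallIn.mono_right {S K L : Submodule R M} (h : SmallIn S K) (hKL : K ≤ L) :
    SmallIn S L := by
  refine ⟨h.1.trans hKL, fun T _ hST => ?_⟩
  have hTK : T ⊓ K = K := by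
    refine h.2 _ inf_le_right ?_
    rw [← sup_inf_assoc_of_le T h.1, hST, inf_eq_right.mpr hKL]
  rw [← hST, eq_comm, sup_eq_right]
  exact h.1.trans (hTK ▸ inf_le_left)

theorem SmallIn.of_top_of_isCompl {S K C : Submodule R M} (h : SmallIn S ⊤) (hSK : S ≤ K)
    (hKC : IsCompl K C) : SmallIn S K := by
  refine ⟨hSK, fun T hTK hST => ?_⟩
  have hTC : T ⊔ C = ⊤ := h.2 _ le_top (by rw [← sup_assoc, hST, hKC.sup_eq_top])
  rw [← top_inf_eq K, ← hTC, sup_inf_assoc_of_le C hTK, inf_comm,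
    disjoint_iff.mp hKC.disjoint, sup_bot_eq]

theorem SmallIn.of_map {f : M →ₗ[R] W} (hf : Function.Injective f) {S K : Submodule R M}
    (h : SmallIn (S.map f) (K.map f)) : SmallIn S K := by
  refine ⟨(Submodule.map_le_map_iff_of_injective hf _ _).mp h.1, fun T hTK hST => ?_⟩
  exact Submodule.map_injective_of_injective hf
    (h.2 _ (Submodule.map_mono hTK) (by rw [← Submodule.map_sup, hST]))

theorem EssentialIn.comap {f : M →ₗ[R] W} (hf : Function.Injective f) {N : Submodule R M}
    {E B : Submodule R W} (hE : E ⊓ LinearMap.range f = N.map f) (h : EssentialIn E B) :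
    EssentialIn N (B.comap f) := by
  refine ⟨Submodule.map_le_iff_le_comap.mp (hE ▸ inf_le_left.trans h.1), fun K hK hNK => ?_⟩
  have hmap : K.map f = ⊥ := by
    refine h.2 _ (Submodule.map_le_iff_le_comap.mpr hK) ?_
    rw [← inf_eq_right.mpr (LinearMap.map_le_range (p := K)), ← inf_assoc, hE,
      ← Submodule.map_inf _ hf, hNK, Submodule.map_bot]
  exact Submodule.map_injective_of_injective hf (hmap.trans (Submodule.map_bot f).symm)

theorem isCompl_comap_of_le_range {f : M →ₗ[R] W} (hf : Function.Injective f)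
    {D K : Submodule R W} (hDK : IsCompl D K) (hD : D ≤ LinearMap.range f) :
    IsCompl (D.comap f) (K.comap f) := by
  constructor
  · rw [disjoint_iff, ← Submodule.comap_inf, disjoint_iff.mp hDK.disjoint, Submodule.comap_bot,
      LinearMap.ker_eq_bot.mpr hf]
  · rw [codisjoint_iff]
    apply Submodule.map_injective_of_injective hf
    rw [Submodule.map_sup, Submodule.map_comap_eq_self hD, Submodule.map_comap_eq, inf_comm,
      ← sup_inf_assoc_of_le K hD, hDK.sup_eq_top, top_inf_eq, Submodule.map_top]

theorem LiesAboveSummand.of_map {f : M →ₗ[R] W} (hf : Function.Injective f) {Z : Submodule R W}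
    (hfZ : IsCompl (LinearMap.range f) Z) {N : Submodule R M}
    (h : LiesAboveSummand (N.map f)) : LiesAboveSummand N := by
  obtain ⟨D, K, hDK, hDN, hsmall⟩ := h
  have hD : D ≤ LinearMap.range f := hDN.trans LinearMap.map_le_range
  have hNK : N.map f ⊓ (LinearMap.range f ⊓ K) = N.map f ⊓ K := by
    rw [← inf_assoc, inf_eq_left.mpr LinearMap.map_le_range]
  refine ⟨D.comap f, K.comap f, isCompl_comap_of_le_range hf hDK hD,
    (Submodule.comap_mono hDN).trans (Submodule.comap_map_eq_of_injective hf N).le, ?_⟩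
  apply SmallIn.of_map hf
  rw [Submodule.map_inf _ hf, Submodule.map_comap_eq, hNK]
  exact (hsmall.mono_right le_top).of_top_of_isCompl (hNK ▸ inf_le_right)
    (isCompl_inf_sup_of_le hfZ hDK.symm hD)

theorem IsDirectSummand.comap {f : M →ₗ[R] W} (hf : Function.Injective f) {Z B : Submodule R W}
    (hfZ : IsCompl (LinearMap.range f) Z) (hZB : Z ≤ B) (hB : IsDirectSummand B) :
    IsDirectSummand (B.comap f) := by
  obtain ⟨C, hBC⟩ := hB
  have h := isCompl_comap_of_le_range hf (isCompl_inf_sup_of_le hBC hfZ hZB) inf_le_right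
  rw [Submodule.comap_inf, LinearMap.range_eq_map, Submodule.comap_map_eq_of_injective hf,
    inf_top_eq] at h
  exact ⟨_, h⟩

section Products

open LinearMap

theorem IsLifting.of_forall_isDCSRickart_prod
    (h : ∀ N : Submodule R M, IsDCSRickart R (M × N)) : IsLifting R M := by
  intro N
  have hrange : range ((inl R M N ∘ₗ N.subtype) ∘ₗ snd R M N) = N.map (inl R M N) := by
    rw [range_comp_of_range_eq_top _ Submodule.range_snd, range_comp, Submodule.range_subtype]
  exact LiesAboveSummand.of_map inl_injective isCompl_range_inl_inr (hrange ▸ h N _)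

theorem IsCSModule.of_forall_isCSRickart_prod_quotient
    (h : ∀ N : Submodule R M, IsCSRickart R (M × (M ⧸ N))) : IsCSModule R M := by
  intro N
  have hker :
      ker ((inr R M (M ⧸ N) ∘ₗ N.mkQ) ∘ₗ fst R M (M ⧸ N)) =
        N.comap (fst R M (M ⧸ N)) := by
    rw [ker_comp, ker_comp, Submodule.ker_inr, Submodule.comap_bot, Submodule.ker_mkQ]
  have hinr : range (inr R M (M ⧸ N)) ≤ N.comap (fst R M (M ⧸ N)) := by
    rw [range_inr, ← Submodule.comap_bot]
    exact Submodule.comap_mono bot_le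
  have hinl :
      N.comap (fst R M (M ⧸ N)) ⊓ range (inl R M (M ⧸ N)) = N.map (inl R M (M ⧸ N)) := by
    rw [Submodule.map_inl, prod_eq_inf_comap, Submodule.comap_bot, range_inl]
  obtain ⟨e, he, hess⟩ := h N ((inr R M (M ⧸ N) ∘ₗ N.mkQ) ∘ₗ fst R M (M ⧸ N))
  rw [hker] at hess
  exact ⟨_, IsDirectSummand.comap inl_injective isCompl_range_inl_inr (hinr.trans hess.1)
    ⟨_, IsIdempotentElem.isCompl he⟩, hess.comap inl_injective hinl⟩

end Products

end Submodules

/-- (1) If every `R`-module is d-CS-Rickart then every `R`-module is lifting.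
(2) If every `R`-module is CS-Rickart then every `R`-module is CS. -/
theorem all_dcsRickart_lifting_all_csRickart_cs
    {R : Type*} [Ring R] :
    ((∀ (M : Type v) [AddCommGroup M] [Module R M], IsDCSRickart R M) →
      ∀ (M : Type v) [AddCommGroup M] [Module R M], IsLifting R M) ∧
    ((∀ (M : Type v) [AddCommGroup M] [Module R M], IsCSRickart R M) →
      ∀ (M : Type v) [AddCommGroup M] [Module R M], IsCSModule R M) :=
  ⟨fun h _ _ _ => IsLifting.of_forall_isDCSRickart_prod fun _ => h _,
    fun h _ _ _ => IsCSModule.of_forall_isCSRickart_prod_quotient fun _ => h _⟩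

end CSRickartPaper
end
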